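/- Strong duality and primal recovery hold between the isotonic regression problem and its dual (BQP): if z* is the optimal solution of (BQP), then θ* := y − Ω⁻¹ Dᵀ z* is the optimal solution of the isotonic regression problem, and the optimal values satisfy ½ Σ_{i=1}^n ωᵢ(yᵢ − θ*ᵢ)² = yᵀ Dᵀ z* − ½ (z*)ᵀ D Ω⁻¹ Dᵀ z*. -/

import Mathlib

/-!
The KKT conditions of the dual problem come from perturbing the minimiser `z*` of
`ψ(z) = ½ zᵀQz − bᵀz` (with `Q = DΩ⁻¹Dᵀ`, `b = Dy`) along `eᵢ`, `z*` and `−z*`: the gradient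
`g = Qz* − b` is nonnegative and `gᵀz* = 0`. For `θ* = y − Ω⁻¹Dᵀz*` one has `Dθ* = −g ≤ 0`,
i.e. `θ*` is monotone. For any monotone `θ`,
`f(θ) = f(θ*) − (Dᵀz*)ᵀ(θ − θ*) + ½ ∑ ωᵢ(θᵢ − θ*ᵢ)²` and
`(Dᵀz*)ᵀ(θ − θ*) = z*ᵀDθ + gᵀz* = z*ᵀDθ ≤ 0`, so `θ*` is optimal. Finally
`f(θ*) = ½ z*ᵀQz*`, and complementary slackness gives `z*ᵀQz* = yᵀDᵀz*`.
Only the fact that `Dθ ≤ 0` characterises monotonicity is specific to the difference matrix.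
-/

open Matrix

/-- The first-order difference matrix `D^(1,n) ∈ ℝ^{(n-1)×n}`:
`D i i = 1`, `D i (i+1) = -1`, all other entries zero. -/
def diffMat1 (n : ℕ) : Matrix (Fin (n-1)) (Fin n) ℝ :=
  Matrix.of fun i j => if (j : ℕ) = (i : ℕ) then 1 else if (j : ℕ) = (i : ℕ) + 1 then -1 else 0

/-- The weighted least-squares objective of the isotonic regression problem. -/
noncomputable def irObj (n : ℕ) (ω y θ : Fin n → ℝ) : ℝ :=
  (1/2) * ∑ i, ω i * (y i - θ i)^2

/-- The dual objective `ψ(z) = ½ zᵀ D Ω⁻¹ Dᵀ z − yᵀ Dᵀ z` of the isotonic regression problem. -/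
noncomputable def dualObj (n : ℕ) (ω y : Fin n → ℝ) (z : Fin (n-1) → ℝ) : ℝ :=
  (1/2) * (z ⬝ᵥ ((diffMat1 n * (Matrix.diagonal ω)⁻¹ * (diffMat1 n)ᵀ) *ᵥ z)) -
    y ⬝ᵥ ((diffMat1 n)ᵀ *ᵥ z)

open Set Filter Topology

lemma nonneg_of_forall_mul_add_sq_mul_nonneg {a c : ℝ}
    (h : ∀ t ∈ Ioc (0 : ℝ) 1, 0 ≤ t * a + t ^ 2 * c) : 0 ≤ a := by
  have hlim : Tendsto (fun t => a + t * c) (𝓝[>] 0) (𝓝 a) :=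
    ((by fun_prop : Continuous fun t : ℝ => a + t * c).tendsto' 0 a (by simp)).mono_left
      nhdsWithin_le_nhds
  refine ge_of_tendsto hlim ?_
  filter_upwards [Ioc_mem_nhdsGT one_pos] with t ht
  have hfactor : t * a + t ^ 2 * c = t * (a + t * c) := by ring
  exact nonneg_of_mul_nonneg_right (hfactor ▸ h t ht) ht.1

lemma diffMat1_mulVec_apply {n : ℕ} (θ : Fin (n + 1) → ℝ) (i : Fin n) :
    (diffMat1 (n + 1) *ᵥ θ) i = θ i.castSucc - θ i.succ := by
  have hne : i.castSucc ≠ i.succ := (Fin.castSucc_lt_succ).ne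
  simp only [mulVec, dotProduct, diffMat1, of_apply]
  rw [Finset.sum_eq_add i.castSucc i.succ hne]
  · simp [sub_eq_add_neg]
  · intro j _ hj
    simp_all [Fin.ext_iff]
  all_goals simp

theorem monotone_iff_diffMat1_mulVec_nonpos {n : ℕ} (θ : Fin n → ℝ) :
    Monotone θ ↔ diffMat1 n *ᵥ θ ≤ 0 := by
  cases n with
  | zero => exact iff_of_true (fun a => a.elim0) (fun i => i.elim0)
  | succ n =>
    rw [Fin.monotone_iff_le_succ, Pi.le_def]
    refine forall_congr' fun i => ?_
    rw [diffMat1_mulVec_apply, Pi.zero_apply, sub_nonpos]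

section QuadraticProgram

variable {m : Type*} [Fintype m] {Q : Matrix m m ℝ} {b z : m → ℝ}

noncomputable def quadObj (Q : Matrix m m ℝ) (b z : m → ℝ) : ℝ :=
  1 / 2 * (z ⬝ᵥ Q *ᵥ z) - b ⬝ᵥ z

lemma quadObj_add_smul (hQ : Q.IsSymm) (z d : m → ℝ) (t : ℝ) :
    quadObj Q b (z + t • d) =
      quadObj Q b z + t * ((Q *ᵥ z - b) ⬝ᵥ d) + t ^ 2 / 2 * (d ⬝ᵥ Q *ᵥ d) := by
  have hswap : d ⬝ᵥ Q *ᵥ z = z ⬝ᵥ Q *ᵥ d := by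
    rw [dotProduct_mulVec, ← mulVec_transpose, hQ.eq, dotProduct_comm]
  simp only [quadObj, mulVec_add, mulVec_smul, dotProduct_add, add_dotProduct, dotProduct_smul,
    smul_dotProduct, smul_eq_mul, sub_dotProduct, dotProduct_comm (Q *ᵥ z) d, hswap]
  ring

lemma IsMinOn.quadObj_grad_dotProduct_nonneg {S : Set (m → ℝ)} (hQ : Q.IsSymm)
    (hmin : IsMinOn (quadObj Q b) S z) {d : m → ℝ} (hd : ∀ t ∈ Ioc (0 : ℝ) 1, z + t • d ∈ S) :
    0 ≤ (Q *ᵥ z - b) ⬝ᵥ d := by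
  refine nonneg_of_forall_mul_add_sq_mul_nonneg (c := (d ⬝ᵥ Q *ᵥ d) / 2) fun t ht => ?_
  have := isMinOn_iff.1 hmin _ (hd t ht)
  rw [quadObj_add_smul hQ] at this
  linarith

theorem IsMinOn.quadObj_kkt (hQ : Q.IsSymm) (hz : 0 ≤ z)
    (hmin : IsMinOn (quadObj Q b) {w | 0 ≤ w} z) :
    0 ≤ Q *ᵥ z - b ∧ (Q *ᵥ z - b) ⬝ᵥ z = 0 := by
  classical
  have hgrad := fun d => hmin.quadObj_grad_dotProduct_nonneg hQ (d := d)
  have hup : 0 ≤ (Q *ᵥ z - b) ⬝ᵥ z := hgrad z fun t ht =>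
    add_nonneg hz (smul_nonneg ht.1.le hz)
  have hdown : 0 ≤ (Q *ᵥ z - b) ⬝ᵥ -z := hgrad (-z) fun t ht => by
    have : z + t • -z = (1 - t) • z := by module
    show 0 ≤ z + t • -z
    rw [this]
    exact smul_nonneg (sub_nonneg.2 ht.2) hz
  refine ⟨fun i => ?_, by rw [dotProduct_neg] at hdown; linarith⟩
  simpa using hgrad (Pi.single i 1) fun t ht =>
    add_nonneg hz (smul_nonneg ht.1.le (Pi.single_nonneg.2 zero_le_one))

end QuadraticProgram

section WeightedLeastSquares

variable {n : ℕ} {ω : Fin n → ℝ}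

lemma mul_inv_diagonal_mulVec_apply (hω : ∀ i, ω i ≠ 0) (u : Fin n → ℝ) (i : Fin n) :
    ω i * ((diagonal ω)⁻¹ *ᵥ u) i = u i := by
  have hdet : IsUnit (diagonal ω).det :=
    isUnit_iff_ne_zero.2 (by simpa [det_diagonal, Finset.prod_ne_zero_iff] using hω)
  have hcancel : diagonal ω *ᵥ ((diagonal ω)⁻¹ *ᵥ u) = u := by
    rw [mulVec_mulVec, mul_nonsing_inv _ hdet, one_mulVec]
  simpa [mulVec_diagonal] using congrFun hcancel i

lemma irObj_sub_inv_diagonal_mulVec (hω : ∀ i, ω i ≠ 0) (y u : Fin n → ℝ) :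
    irObj n ω y (y - (diagonal ω)⁻¹ *ᵥ u) = 1 / 2 * (u ⬝ᵥ (diagonal ω)⁻¹ *ᵥ u) := by
  simp only [irObj, dotProduct, Pi.sub_apply, sub_sub_cancel, ← mul_inv_diagonal_mulVec_apply hω u]
  congr 1
  exact Finset.sum_congr rfl fun i _ => by ring

lemma irObj_sub_inv_diagonal_mulVec_le (hω : ∀ i, 0 < ω i) {y u θ : Fin n → ℝ}
    (h : u ⬝ᵥ (θ - (y - (diagonal ω)⁻¹ *ᵥ u)) ≤ 0) :
    irObj n ω y (y - (diagonal ω)⁻¹ *ᵥ u) ≤ irObj n ω y θ := by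
  set x := (diagonal ω)⁻¹ *ᵥ u
  have hux : ∀ i, ω i * x i = u i := mul_inv_diagonal_mulVec_apply (fun i => (hω i).ne') u
  have hsplit : irObj n ω y θ = irObj n ω y (y - x) - u ⬝ᵥ (θ - (y - x)) +
      1 / 2 * ∑ i, ω i * (θ i - (y - x) i) ^ 2 := by
    simp only [irObj, dotProduct, Finset.mul_sum, ← Finset.sum_sub_distrib,
      ← Finset.sum_add_distrib, Pi.sub_apply, ← hux]
    exact Finset.sum_congr rfl fun i _ => by ring
  have hquad : 0 ≤ ∑ i, ω i * (θ i - (y - x) i) ^ 2 :=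
    Finset.sum_nonneg fun i _ => mul_nonneg (hω i).le (sq_nonneg _)
  linarith

end WeightedLeastSquares

lemma isSymm_mul_inv_diagonal_mul_transpose {m : Type*} {n : ℕ} (D : Matrix m (Fin n) ℝ)
    (ω : Fin n → ℝ) : (D * (diagonal ω)⁻¹ * Dᵀ).IsSymm := by
  simp only [IsSymm, transpose_mul, transpose_transpose, (isSymm_diagonal ω).inv.eq,
    Matrix.mul_assoc]

section Duality

variable {m : Type*} [Fintype m] {n : ℕ} (D : Matrix m (Fin n) ℝ) {ω y : Fin n → ℝ} {z : m → ℝ}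

lemma mulVec_sub_inv_diagonal_mulVec :
    D *ᵥ (y - (diagonal ω)⁻¹ *ᵥ (Dᵀ *ᵥ z)) = -((D * (diagonal ω)⁻¹ * Dᵀ) *ᵥ z - D *ᵥ y) := by
  rw [mulVec_sub, ← mulVec_mulVec, ← mulVec_mulVec, neg_sub]

lemma dotProduct_mul_inv_diagonal_mul_transpose_mulVec :
    z ⬝ᵥ (D * (diagonal ω)⁻¹ * Dᵀ) *ᵥ z = (Dᵀ *ᵥ z) ⬝ᵥ (diagonal ω)⁻¹ *ᵥ (Dᵀ *ᵥ z) := by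
  rw [← mulVec_mulVec, ← mulVec_mulVec, dotProduct_mulVec, mulVec_transpose]

theorem strong_duality_of_isMinOn_quadObj (hω : ∀ i, 0 < ω i) (hz : 0 ≤ z)
    (hmin : IsMinOn (quadObj (D * (diagonal ω)⁻¹ * Dᵀ) (D *ᵥ y)) {w | 0 ≤ w} z) :
    (D *ᵥ (y - (diagonal ω)⁻¹ *ᵥ (Dᵀ *ᵥ z)) ≤ 0 ∧
      ∀ θ, D *ᵥ θ ≤ 0 → irObj n ω y (y - (diagonal ω)⁻¹ *ᵥ (Dᵀ *ᵥ z)) ≤ irObj n ω y θ) ∧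
    irObj n ω y (y - (diagonal ω)⁻¹ *ᵥ (Dᵀ *ᵥ z)) =
      y ⬝ᵥ (Dᵀ *ᵥ z) - 1 / 2 * (z ⬝ᵥ (D * (diagonal ω)⁻¹ * Dᵀ) *ᵥ z) := by
  obtain ⟨hgrad, hslack⟩ := hmin.quadObj_kkt (isSymm_mul_inv_diagonal_mul_transpose D ω) hz
  have hDθ := mulVec_sub_inv_diagonal_mulVec D (ω := ω) (y := y) (z := z)
  refine ⟨⟨hDθ ▸ neg_nonpos.2 hgrad, fun θ hθ => ?_⟩, ?_⟩
  · refine irObj_sub_inv_diagonal_mulVec_le hω ?_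
    have hzDθ : z ⬝ᵥ D *ᵥ θ ≤ 0 := by
      simpa using dotProduct_le_dotProduct_of_nonneg_left hθ hz
    have hzg : z ⬝ᵥ ((D * (diagonal ω)⁻¹ * Dᵀ) *ᵥ z - D *ᵥ y) = 0 := by
      rw [dotProduct_comm, hslack]
    rw [dotProduct_comm, dotProduct_transpose_mulVec, mulVec_sub, dotProduct_sub, hDθ,
      dotProduct_neg, hzg]
    linarith
  · rw [irObj_sub_inv_diagonal_mulVec fun i => (hω i).ne',
      ← dotProduct_mul_inv_diagonal_mul_transpose_mulVec]
    have hvalue : z ⬝ᵥ (D * (diagonal ω)⁻¹ * Dᵀ) *ᵥ z = y ⬝ᵥ Dᵀ *ᵥ z := by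
      rw [dotProduct_transpose_mulVec, ← sub_eq_zero, ← dotProduct_sub, dotProduct_comm, hslack]
    rw [hvalue]
    ring

end Duality

lemma dualObj_eq_quadObj (n : ℕ) (ω y : Fin n → ℝ) :
    dualObj n ω y = quadObj (diffMat1 n * (diagonal ω)⁻¹ * (diffMat1 n)ᵀ) (diffMat1 n *ᵥ y) := by
  ext z
  rw [dualObj, quadObj, dotProduct_transpose_mulVec, dotProduct_comm (diffMat1 n *ᵥ y)]

theorem isotonic_regression_strong_duality_general (n : ℕ) (y ω : Fin n → ℝ)
    (hω : ∀ i, 0 < ω i) (z : Fin (n-1) → ℝ)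
    (hzfeas : ∀ i, 0 ≤ z i)
    (hzopt : ∀ w : Fin (n-1) → ℝ, (∀ i, 0 ≤ w i) → dualObj n ω y z ≤ dualObj n ω y w) :
    (Monotone (y - (Matrix.diagonal ω)⁻¹ *ᵥ ((diffMat1 n)ᵀ *ᵥ z)) ∧
      ∀ θ' : Fin n → ℝ, Monotone θ' →
        irObj n ω y (y - (Matrix.diagonal ω)⁻¹ *ᵥ ((diffMat1 n)ᵀ *ᵥ z)) ≤ irObj n ω y θ') ∧
    irObj n ω y (y - (Matrix.diagonal ω)⁻¹ *ᵥ ((diffMat1 n)ᵀ *ᵥ z)) =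
      y ⬝ᵥ ((diffMat1 n)ᵀ *ᵥ z) -
        (1/2) * (z ⬝ᵥ ((diffMat1 n * (Matrix.diagonal ω)⁻¹ * (diffMat1 n)ᵀ) *ᵥ z)) := by
  have hmin : IsMinOn (dualObj n ω y) {w | 0 ≤ w} z := fun w hw => hzopt w hw
  rw [dualObj_eq_quadObj] at hmin
  simp only [monotone_iff_diffMat1_mulVec_nonpos]
  exact strong_duality_of_isMinOn_quadObj (diffMat1 n) hω hzfeas hmin

/-- Strong duality and primal recovery: if `z*` solves the dual (BQP), then
`θ* = y − Ω⁻¹ Dᵀ z*` solves the isotonic regression problem, and the optimal values agree: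
`½ ∑ ωᵢ(yᵢ − θ*ᵢ)² = yᵀDᵀz* − ½ (z*)ᵀ D Ω⁻¹ Dᵀ z*`. -/
theorem isotonic_regression_strong_duality (n : ℕ) (hn : 2 ≤ n) (y ω : Fin n → ℝ)
    (hω : ∀ i, 0 < ω i) (z : Fin (n-1) → ℝ)
    (hzfeas : ∀ i, 0 ≤ z i)
    (hzopt : ∀ w : Fin (n-1) → ℝ, (∀ i, 0 ≤ w i) → dualObj n ω y z ≤ dualObj n ω y w) :
    (Monotone (y - (Matrix.diagonal ω)⁻¹ *ᵥ ((diffMat1 n)ᵀ *ᵥ z)) ∧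
      ∀ θ' : Fin n → ℝ, Monotone θ' →
        irObj n ω y (y - (Matrix.diagonal ω)⁻¹ *ᵥ ((diffMat1 n)ᵀ *ᵥ z)) ≤ irObj n ω y θ') ∧
    irObj n ω y (y - (Matrix.diagonal ω)⁻¹ *ᵥ ((diffMat1 n)ᵀ *ᵥ z)) =
      y ⬝ᵥ ((diffMat1 n)ᵀ *ᵥ z) -
        (1/2) * (z ⬝ᵥ ((diffMat1 n * (Matrix.diagonal ω)⁻¹ * (diffMat1 n)ᵀ) *ᵥ z)) :=
  isotonic_regression_strong_duality_general n y ω hω z hzfeas hzopt
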